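/- Let k be a field and let (X, Δ, ε, T) be a ternary self-distributive (TSD) object in vector spaces over k: (X, Δ, ε) is a coassociative cocommutative counital coalgebra, Δ₃ := (Δ⊗id)∘Δ, and T : X^⊗3 → X is a linear map satisfying (a) the coalgebra-morphism condition Δ₃∘T = (T⊗T⊗T)∘sh∘(Δ₃⊗Δ₃⊗Δ₃), where sh : X^⊗9 → X^⊗9 sends x₁⊗…⊗x₉ to x₁⊗x₄⊗x₇⊗x₂⊗x₅⊗x₈⊗x₃⊗x₆⊗x₉, and (b) the ternary self-distributivity T(T(x⊗y⊗z)⊗w⊗u) = T(T(x⊗w⁽¹⁾⊗u⁽¹⁾)⊗T(y⊗w⁽²⁾⊗u⁽²⁾)⊗T(z⊗w⁽³⁾⊗u⁽³⁾)), where Δ₃(w) = w⁽¹⁾⊗w⁽²⁾⊗w⁽³⁾ (Sweedler). Then for every ternary coderivation f : X → X (i.e. Δ₃∘f = (f⊗id⊗id + id⊗f⊗id + id⊗id⊗f)∘Δ₃): (i) δ¹f satisfies the TSD 2-cochain condition Δ₃∘(δ¹f) = (δ¹f⊗T⊗T + T⊗δ¹f⊗T + T⊗T⊗δ¹f)∘sh∘(Δ₃⊗Δ₃⊗Δ₃);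 and (ii) δ²(δ¹f) = 0. -/
import Mathlib


open TensorProduct

noncomputable section

section TSDCore

variable {k : Type*} [Field k] {X : Type*} [AddCommGroup X] [Module k X]

/-- The ternary comultiplication `Δ₃ = (Δ ⊗ id) ∘ Δ`. -/
def D3 (Δ : X →ₗ[k] X ⊗[k] X) : X →ₗ[k] (X ⊗[k] X) ⊗[k] X :=
  TensorProduct.map Δ LinearMap.id ∘ₗ Δ

/-- `f : X → X` is a ternary coderivation:
`Δ₃∘f = (f⊗id⊗id + id⊗f⊗id + id⊗id⊗f)∘Δ₃`. -/
def IsTernaryCoderivation (Δ : X →ₗ[k] X ⊗[k] X) (f : X →ₗ[k] X) : Prop :=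
  D3 Δ ∘ₗ f
    = (TensorProduct.map (TensorProduct.map f LinearMap.id) LinearMap.id
        + TensorProduct.map (TensorProduct.map LinearMap.id f) LinearMap.id
        + TensorProduct.map (LinearMap.id : X ⊗[k] X →ₗ[k] X ⊗[k] X) f) ∘ₗ D3 Δ

/-- The TSD 2-cochain condition
`Δ₃∘ψ = (ψ⊗T⊗T + T⊗ψ⊗T + T⊗T⊗ψ)∘sh∘(Δ₃⊗Δ₃⊗Δ₃)`, relative to the shuffle `sh`
(which sends `x₁⊗…⊗x₉` to `x₁⊗x₄⊗x₇⊗x₂⊗x₅⊗x₈⊗x₃⊗x₆⊗x₉`). -/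
def IsTSD2Cochain (Δ : X →ₗ[k] X ⊗[k] X) (T : (X ⊗[k] X) ⊗[k] X →ₗ[k] X)
    (sh : (((X ⊗[k] X) ⊗[k] X) ⊗[k] ((X ⊗[k] X) ⊗[k] X)) ⊗[k] ((X ⊗[k] X) ⊗[k] X) →ₗ[k]
      (((X ⊗[k] X) ⊗[k] X) ⊗[k] ((X ⊗[k] X) ⊗[k] X)) ⊗[k] ((X ⊗[k] X) ⊗[k] X))
    (ψ : (X ⊗[k] X) ⊗[k] X →ₗ[k] X) : Prop :=
  D3 Δ ∘ₗ ψ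
    = (TensorProduct.map (TensorProduct.map ψ T) T
        + TensorProduct.map (TensorProduct.map T ψ) T
        + TensorProduct.map (TensorProduct.map T T) ψ) ∘ₗ sh ∘ₗ
      TensorProduct.map (TensorProduct.map (D3 Δ) (D3 Δ)) (D3 Δ)

/-- The coalgebra-morphism condition `Δ₃∘T = (T⊗T⊗T)∘sh∘(Δ₃⊗Δ₃⊗Δ₃)`. -/
def IsCoalgMor3 (Δ : X →ₗ[k] X ⊗[k] X) (T : (X ⊗[k] X) ⊗[k] X →ₗ[k] X)
    (sh : (((X ⊗[k] X) ⊗[k] X) ⊗[k] ((X ⊗[k] X) ⊗[k] X)) ⊗[k] ((X ⊗[k] X) ⊗[k] X) →ₗ[k]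
      (((X ⊗[k] X) ⊗[k] X) ⊗[k] ((X ⊗[k] X) ⊗[k] X)) ⊗[k] ((X ⊗[k] X) ⊗[k] X)) : Prop :=
  D3 Δ ∘ₗ T
    = TensorProduct.map (TensorProduct.map T T) T ∘ₗ sh ∘ₗ
      TensorProduct.map (TensorProduct.map (D3 Δ) (D3 Δ)) (D3 Δ)

/-- The ternary self-distributivity condition
`T(T(x⊗y⊗z)⊗w⊗u) = T(T(x⊗w⁽¹⁾⊗u⁽¹⁾)⊗T(y⊗w⁽²⁾⊗u⁽²⁾)⊗T(z⊗w⁽³⁾⊗u⁽³⁾))`, stated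
compositionally on `X^{⊗3} ⊗ X^{⊗2}`, relative to the rearrangement `ρ` (which sends
`(x⊗y⊗z)⊗((w₁⊗w₂⊗w₃)⊗(u₁⊗u₂⊗u₃))` to `(x⊗w₁⊗u₁)⊗(y⊗w₂⊗u₂)⊗(z⊗w₃⊗u₃)`). -/
def IsTSDMap (Δ : X →ₗ[k] X ⊗[k] X) (T : (X ⊗[k] X) ⊗[k] X →ₗ[k] X)
    (ρ : ((X ⊗[k] X) ⊗[k] X) ⊗[k] (((X ⊗[k] X) ⊗[k] X) ⊗[k] ((X ⊗[k] X) ⊗[k] X)) →ₗ[k]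
      (((X ⊗[k] X) ⊗[k] X) ⊗[k] ((X ⊗[k] X) ⊗[k] X)) ⊗[k] ((X ⊗[k] X) ⊗[k] X)) : Prop :=
  T ∘ₗ (TensorProduct.assoc k X X X).symm.toLinearMap ∘ₗ
      TensorProduct.map T (LinearMap.id : X ⊗[k] X →ₗ[k] X ⊗[k] X)
    = T ∘ₗ TensorProduct.map (TensorProduct.map T T) T ∘ₗ ρ ∘ₗ
      TensorProduct.map LinearMap.id (TensorProduct.map (D3 Δ) (D3 Δ))

/-- The TSD first differential
`δ¹f(x⊗y⊗z) = f(T(x⊗y⊗z)) − T(f(x)⊗y⊗z) − T(x⊗f(y)⊗z) − T(x⊗y⊗f(z))`. -/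
def tsdD1 (T : (X ⊗[k] X) ⊗[k] X →ₗ[k] X) (f : X →ₗ[k] X) :
    (X ⊗[k] X) ⊗[k] X →ₗ[k] X :=
  f ∘ₗ T - T ∘ₗ TensorProduct.map (TensorProduct.map f LinearMap.id) LinearMap.id
    - T ∘ₗ TensorProduct.map (TensorProduct.map LinearMap.id f) LinearMap.id
    - T ∘ₗ TensorProduct.map (LinearMap.id : X ⊗[k] X →ₗ[k] X ⊗[k] X) f

/-- The TSD second differential `δ²ψ`, stated compositionally on `X^{⊗3} ⊗ X^{⊗2}`:
`δ²ψ(x⊗y⊗z⊗w⊗u) = T(ψ(x⊗y⊗z)⊗w⊗u) + ψ(T(x⊗y⊗z)⊗w⊗u)`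
`− ψ(T(x⊗w⁽¹⁾⊗u⁽¹⁾)⊗T(y⊗w⁽²⁾⊗u⁽²⁾)⊗T(z⊗w⁽³⁾⊗u⁽³⁾))`
`− T(ψ(x⊗w⁽¹⁾⊗u⁽¹⁾)⊗T(y⊗w⁽²⁾⊗u⁽²⁾)⊗T(z⊗w⁽³⁾⊗u⁽³⁾))`
`− T(T(x⊗w⁽¹⁾⊗u⁽¹⁾)⊗ψ(y⊗w⁽²⁾⊗u⁽²⁾)⊗T(z⊗w⁽³⁾⊗u⁽³⁾))`
`− T(T(x⊗w⁽¹⁾⊗u⁽¹⁾)⊗T(y⊗w⁽²⁾⊗u⁽²⁾)⊗ψ(z⊗w⁽³⁾⊗u⁽³⁾))`, relative to `ρ`. -/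
def tsdD2 (Δ : X →ₗ[k] X ⊗[k] X) (T : (X ⊗[k] X) ⊗[k] X →ₗ[k] X)
    (ρ : ((X ⊗[k] X) ⊗[k] X) ⊗[k] (((X ⊗[k] X) ⊗[k] X) ⊗[k] ((X ⊗[k] X) ⊗[k] X)) →ₗ[k]
      (((X ⊗[k] X) ⊗[k] X) ⊗[k] ((X ⊗[k] X) ⊗[k] X)) ⊗[k] ((X ⊗[k] X) ⊗[k] X))
    (ψ : (X ⊗[k] X) ⊗[k] X →ₗ[k] X) :
    ((X ⊗[k] X) ⊗[k] X) ⊗[k] (X ⊗[k] X) →ₗ[k] X :=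
  T ∘ₗ (TensorProduct.assoc k X X X).symm.toLinearMap ∘ₗ
      TensorProduct.map ψ (LinearMap.id : X ⊗[k] X →ₗ[k] X ⊗[k] X)
    + ψ ∘ₗ (TensorProduct.assoc k X X X).symm.toLinearMap ∘ₗ
      TensorProduct.map T (LinearMap.id : X ⊗[k] X →ₗ[k] X ⊗[k] X)
    - ψ ∘ₗ TensorProduct.map (TensorProduct.map T T) T ∘ₗ ρ ∘ₗ
      TensorProduct.map LinearMap.id (TensorProduct.map (D3 Δ) (D3 Δ))
    - T ∘ₗ TensorProduct.map (TensorProduct.map ψ T) T ∘ₗ ρ ∘ₗ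
      TensorProduct.map LinearMap.id (TensorProduct.map (D3 Δ) (D3 Δ))
    - T ∘ₗ TensorProduct.map (TensorProduct.map T ψ) T ∘ₗ ρ ∘ₗ
      TensorProduct.map LinearMap.id (TensorProduct.map (D3 Δ) (D3 Δ))
    - T ∘ₗ TensorProduct.map (TensorProduct.map T T) ψ ∘ₗ ρ ∘ₗ
      TensorProduct.map LinearMap.id (TensorProduct.map (D3 Δ) (D3 Δ))

end TSDCore


namespace TSDAux

variable {k : Type*} [Field k]

/-- act on the first slot of a triple tensor -/
def LL1 {M N P : Type*} [AddCommGroup M] [Module k M] [AddCommGroup N] [Module k N]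
    [AddCommGroup P] [Module k P] (g : M →ₗ[k] M) :
    (M ⊗[k] N) ⊗[k] P →ₗ[k] (M ⊗[k] N) ⊗[k] P :=
  TensorProduct.map (TensorProduct.map g LinearMap.id) LinearMap.id

def LL2 {M N P : Type*} [AddCommGroup M] [Module k M] [AddCommGroup N] [Module k N]
    [AddCommGroup P] [Module k P] (g : N →ₗ[k] N) :
    (M ⊗[k] N) ⊗[k] P →ₗ[k] (M ⊗[k] N) ⊗[k] P :=
  TensorProduct.map (TensorProduct.map LinearMap.id g) LinearMap.id

def LL3 {M N P : Type*} [AddCommGroup M] [Module k M] [AddCommGroup N] [Module k N]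
    [AddCommGroup P] [Module k P] (g : P →ₗ[k] P) :
    (M ⊗[k] N) ⊗[k] P →ₗ[k] (M ⊗[k] N) ⊗[k] P :=
  TensorProduct.map (LinearMap.id : M ⊗[k] N →ₗ[k] M ⊗[k] N) g

@[simp] lemma LL1_tmul {M N P : Type*} [AddCommGroup M] [Module k M] [AddCommGroup N]
    [Module k N] [AddCommGroup P] [Module k P] (g : M →ₗ[k] M) (x : M) (y : N) (z : P) :
    LL1 g ((x ⊗ₜ[k] y) ⊗ₜ[k] z) = (g x ⊗ₜ[k] y) ⊗ₜ[k] z := rfl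

@[simp] lemma LL2_tmul {M N P : Type*} [AddCommGroup M] [Module k M] [AddCommGroup N]
    [Module k N] [AddCommGroup P] [Module k P] (g : N →ₗ[k] N) (x : M) (y : N) (z : P) :
    LL2 g ((x ⊗ₜ[k] y) ⊗ₜ[k] z) = (x ⊗ₜ[k] g y) ⊗ₜ[k] z := rfl

@[simp] lemma LL3_tmul {M N P : Type*} [AddCommGroup M] [Module k M] [AddCommGroup N]
    [Module k N] [AddCommGroup P] [Module k P] (g : P →ₗ[k] P) (x : M) (y : N) (z : P) :
    LL3 g ((x ⊗ₜ[k] y) ⊗ₜ[k] z) = (x ⊗ₜ[k] y) ⊗ₜ[k] g z := rfl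

lemma mapsubl {M N P Q : Type*} [AddCommGroup M] [Module k M] [AddCommGroup N] [Module k N]
    [AddCommGroup P] [Module k P] [AddCommGroup Q] [Module k Q]
    (f g : M →ₗ[k] P) (h : N →ₗ[k] Q) :
    TensorProduct.map (f - g) h = TensorProduct.map f h - TensorProduct.map g h := by
  ext m n; simp [sub_tmul]

lemma mapsubr {M N P Q : Type*} [AddCommGroup M] [Module k M] [AddCommGroup N] [Module k N]
    [AddCommGroup P] [Module k P] [AddCommGroup Q] [Module k Q]
    (f : M →ₗ[k] P) (g h : N →ₗ[k] Q) :
    TensorProduct.map f (g - h) = TensorProduct.map f g - TensorProduct.map f h := by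
  ext m n; simp [tmul_sub]

lemma comp_push {M N P Q V : Type*} [AddCommGroup M] [Module k M] [AddCommGroup N] [Module k N]
    [AddCommGroup P] [Module k P] [AddCommGroup Q] [Module k Q] [AddCommGroup V] [Module k V]
    {a : N →ₗ[k] P} {b : M →ₗ[k] N} {c : Q →ₗ[k] P} {d : M →ₗ[k] Q}
    (h : a ∘ₗ b = c ∘ₗ d) (κ : V →ₗ[k] M) :
    a ∘ₗ (b ∘ₗ κ) = c ∘ₗ (d ∘ₗ κ) := by
  rw [← LinearMap.comp_assoc, ← LinearMap.comp_assoc, h]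

lemma comp_push1 {M N P V : Type*} [AddCommGroup M] [Module k M] [AddCommGroup N] [Module k N]
    [AddCommGroup P] [Module k P] [AddCommGroup V] [Module k V]
    {a : N →ₗ[k] P} {b : M →ₗ[k] N} {c : M →ₗ[k] P}
    (h : a ∘ₗ b = c) (κ : V →ₗ[k] M) :
    a ∘ₗ (b ∘ₗ κ) = c ∘ₗ κ := by
  rw [← LinearMap.comp_assoc, h]

end TSDAux

section PartI
open TSDAux
set_option maxHeartbeats 1000000
variable {k : Type*} [Field k] {X : Type*} [AddCommGroup X] [Module k X]

theorem partI (Δ : X →ₗ[k] X ⊗[k] X) (T : (X ⊗[k] X) ⊗[k] X →ₗ[k] X)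
    (sh : (((X ⊗[k] X) ⊗[k] X) ⊗[k] ((X ⊗[k] X) ⊗[k] X)) ⊗[k] ((X ⊗[k] X) ⊗[k] X) →ₗ[k]
      (((X ⊗[k] X) ⊗[k] X) ⊗[k] ((X ⊗[k] X) ⊗[k] X)) ⊗[k] ((X ⊗[k] X) ⊗[k] X))
    (hsh : ∀ x1 x2 x3 x4 x5 x6 x7 x8 x9 : X,
      sh ((((x1 ⊗ₜ[k] x2) ⊗ₜ[k] x3) ⊗ₜ[k] ((x4 ⊗ₜ[k] x5) ⊗ₜ[k] x6)) ⊗ₜ[k]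
            ((x7 ⊗ₜ[k] x8) ⊗ₜ[k] x9))
        = (((x1 ⊗ₜ[k] x4) ⊗ₜ[k] x7) ⊗ₜ[k] ((x2 ⊗ₜ[k] x5) ⊗ₜ[k] x8)) ⊗ₜ[k]
            ((x3 ⊗ₜ[k] x6) ⊗ₜ[k] x9))
    (hTmor : IsCoalgMor3 Δ T sh)
    (f : X →ₗ[k] X) (hf : IsTernaryCoderivation Δ f) :
    IsTSD2Cochain Δ T sh (tsdD1 T f) := by
  have hf' : D3 Δ ∘ₗ f = (LL1 f + LL2 f + LL3 f) ∘ₗ D3 Δ := hf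
  have hfx : ∀ x : X, D3 Δ (f x) = LL1 f (D3 Δ x) + LL2 f (D3 Δ x) + LL3 f (D3 Δ x) := by
    intro x
    simpa using LinearMap.congr_fun hf' x
  have hTm : D3 Δ ∘ₗ T
      = TensorProduct.map (TensorProduct.map T T) T ∘ₗ sh ∘ₗ
          TensorProduct.map (TensorProduct.map (D3 Δ) (D3 Δ)) (D3 Δ) := hTmor
  have hTmx : ∀ u : (X ⊗[k] X) ⊗[k] X, D3 Δ (T u)
      = TensorProduct.map (TensorProduct.map T T) T (sh
          (TensorProduct.map (TensorProduct.map (D3 Δ) (D3 Δ)) (D3 Δ) u)) := by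
    intro u
    simpa using LinearMap.congr_fun hTm u
  -- shuffle conjugation, map level
  have hs11 : sh ∘ₗ LL1 (LL1 f) = LL1 (LL1 f) ∘ₗ sh := by
    ext x1 x2 x3 x4 x5 x6 x7 x8 x9; simp [hsh]
  have hs12 : sh ∘ₗ LL1 (LL2 f) = LL2 (LL1 f) ∘ₗ sh := by
    ext x1 x2 x3 x4 x5 x6 x7 x8 x9; simp [hsh]
  have hs13 : sh ∘ₗ LL1 (LL3 f) = LL3 (LL1 f) ∘ₗ sh := by
    ext x1 x2 x3 x4 x5 x6 x7 x8 x9; simp [hsh]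
  have hs21 : sh ∘ₗ LL2 (LL1 f) = LL1 (LL2 f) ∘ₗ sh := by
    ext x1 x2 x3 x4 x5 x6 x7 x8 x9; simp [hsh]
  have hs22 : sh ∘ₗ LL2 (LL2 f) = LL2 (LL2 f) ∘ₗ sh := by
    ext x1 x2 x3 x4 x5 x6 x7 x8 x9; simp [hsh]
  have hs23 : sh ∘ₗ LL2 (LL3 f) = LL3 (LL2 f) ∘ₗ sh := by
    ext x1 x2 x3 x4 x5 x6 x7 x8 x9; simp [hsh]
  have hs31 : sh ∘ₗ LL3 (LL1 f) = LL1 (LL3 f) ∘ₗ sh := by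
    ext x1 x2 x3 x4 x5 x6 x7 x8 x9; simp [hsh]
  have hs32 : sh ∘ₗ LL3 (LL2 f) = LL2 (LL3 f) ∘ₗ sh := by
    ext x1 x2 x3 x4 x5 x6 x7 x8 x9; simp [hsh]
  have hs33 : sh ∘ₗ LL3 (LL3 f) = LL3 (LL3 f) ∘ₗ sh := by
    ext x1 x2 x3 x4 x5 x6 x7 x8 x9; simp [hsh]
  -- shuffle conjugation, pointwise with general triple entries
  have hsx11 : ∀ a b c : (X ⊗[k] X) ⊗[k] X,
      sh ((LL1 f a ⊗ₜ[k] b) ⊗ₜ[k] c) = LL1 (LL1 f) (sh ((a ⊗ₜ[k] b) ⊗ₜ[k] c)) := by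
    intro a b c; simpa using LinearMap.congr_fun hs11 ((a ⊗ₜ[k] b) ⊗ₜ[k] c)
  have hsx12 : ∀ a b c : (X ⊗[k] X) ⊗[k] X,
      sh ((LL2 f a ⊗ₜ[k] b) ⊗ₜ[k] c) = LL2 (LL1 f) (sh ((a ⊗ₜ[k] b) ⊗ₜ[k] c)) := by
    intro a b c; simpa using LinearMap.congr_fun hs12 ((a ⊗ₜ[k] b) ⊗ₜ[k] c)
  have hsx13 : ∀ a b c : (X ⊗[k] X) ⊗[k] X,
      sh ((LL3 f a ⊗ₜ[k] b) ⊗ₜ[k] c) = LL3 (LL1 f) (sh ((a ⊗ₜ[k] b) ⊗ₜ[k] c)) := by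
    intro a b c; simpa using LinearMap.congr_fun hs13 ((a ⊗ₜ[k] b) ⊗ₜ[k] c)
  have hsx21 : ∀ a b c : (X ⊗[k] X) ⊗[k] X,
      sh ((a ⊗ₜ[k] LL1 f b) ⊗ₜ[k] c) = LL1 (LL2 f) (sh ((a ⊗ₜ[k] b) ⊗ₜ[k] c)) := by
    intro a b c; simpa using LinearMap.congr_fun hs21 ((a ⊗ₜ[k] b) ⊗ₜ[k] c)
  have hsx22 : ∀ a b c : (X ⊗[k] X) ⊗[k] X,
      sh ((a ⊗ₜ[k] LL2 f b) ⊗ₜ[k] c) = LL2 (LL2 f) (sh ((a ⊗ₜ[k] b) ⊗ₜ[k] c)) := by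
    intro a b c; simpa using LinearMap.congr_fun hs22 ((a ⊗ₜ[k] b) ⊗ₜ[k] c)
  have hsx23 : ∀ a b c : (X ⊗[k] X) ⊗[k] X,
      sh ((a ⊗ₜ[k] LL3 f b) ⊗ₜ[k] c) = LL3 (LL2 f) (sh ((a ⊗ₜ[k] b) ⊗ₜ[k] c)) := by
    intro a b c; simpa using LinearMap.congr_fun hs23 ((a ⊗ₜ[k] b) ⊗ₜ[k] c)
  have hsx31 : ∀ a b c : (X ⊗[k] X) ⊗[k] X,
      sh ((a ⊗ₜ[k] b) ⊗ₜ[k] LL1 f c) = LL1 (LL3 f) (sh ((a ⊗ₜ[k] b) ⊗ₜ[k] c)) := by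
    intro a b c; simpa using LinearMap.congr_fun hs31 ((a ⊗ₜ[k] b) ⊗ₜ[k] c)
  have hsx32 : ∀ a b c : (X ⊗[k] X) ⊗[k] X,
      sh ((a ⊗ₜ[k] b) ⊗ₜ[k] LL2 f c) = LL2 (LL3 f) (sh ((a ⊗ₜ[k] b) ⊗ₜ[k] c)) := by
    intro a b c; simpa using LinearMap.congr_fun hs32 ((a ⊗ₜ[k] b) ⊗ₜ[k] c)
  have hsx33 : ∀ a b c : (X ⊗[k] X) ⊗[k] X,
      sh ((a ⊗ₜ[k] b) ⊗ₜ[k] LL3 f c) = LL3 (LL3 f) (sh ((a ⊗ₜ[k] b) ⊗ₜ[k] c)) := by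
    intro a b c; simpa using LinearMap.congr_fun hs33 ((a ⊗ₜ[k] b) ⊗ₜ[k] c)
  -- merge lemmas, pointwise
  have hM1x : ∀ (g : (X ⊗[k] X) ⊗[k] X →ₗ[k] (X ⊗[k] X) ⊗[k] X)
      (u : (((X ⊗[k] X) ⊗[k] X) ⊗[k] ((X ⊗[k] X) ⊗[k] X)) ⊗[k] ((X ⊗[k] X) ⊗[k] X)),
      TensorProduct.map (TensorProduct.map T T) T (LL1 g u)
        = TensorProduct.map (TensorProduct.map (T ∘ₗ g) T) T u := by
    intro g u
    have h : TensorProduct.map (TensorProduct.map T T) T ∘ₗ LL1 g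
        = TensorProduct.map (TensorProduct.map (T ∘ₗ g) T) T := by
      ext a b c; simp
    simpa using LinearMap.congr_fun h u
  have hM2x : ∀ (g : (X ⊗[k] X) ⊗[k] X →ₗ[k] (X ⊗[k] X) ⊗[k] X)
      (u : (((X ⊗[k] X) ⊗[k] X) ⊗[k] ((X ⊗[k] X) ⊗[k] X)) ⊗[k] ((X ⊗[k] X) ⊗[k] X)),
      TensorProduct.map (TensorProduct.map T T) T (LL2 g u)
        = TensorProduct.map (TensorProduct.map T (T ∘ₗ g)) T u := by
    intro g u
    have h : TensorProduct.map (TensorProduct.map T T) T ∘ₗ LL2 g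
        = TensorProduct.map (TensorProduct.map T (T ∘ₗ g)) T := by
      ext a b c; simp
    simpa using LinearMap.congr_fun h u
  have hM3x : ∀ (g : (X ⊗[k] X) ⊗[k] X →ₗ[k] (X ⊗[k] X) ⊗[k] X)
      (u : (((X ⊗[k] X) ⊗[k] X) ⊗[k] ((X ⊗[k] X) ⊗[k] X)) ⊗[k] ((X ⊗[k] X) ⊗[k] X)),
      TensorProduct.map (TensorProduct.map T T) T (LL3 g u)
        = TensorProduct.map (TensorProduct.map T T) (T ∘ₗ g) u := by
    intro g u
    have h : TensorProduct.map (TensorProduct.map T T) T ∘ₗ LL3 g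
        = TensorProduct.map (TensorProduct.map T T) (T ∘ₗ g) := by
      ext a b c; simp
    simpa using LinearMap.congr_fun h u
  have hq1x : ∀ u : (((X ⊗[k] X) ⊗[k] X) ⊗[k] ((X ⊗[k] X) ⊗[k] X)) ⊗[k] ((X ⊗[k] X) ⊗[k] X),
      LL1 f (TensorProduct.map (TensorProduct.map T T) T u)
        = TensorProduct.map (TensorProduct.map (f ∘ₗ T) T) T u := by
    intro u
    have h : LL1 f ∘ₗ TensorProduct.map (TensorProduct.map T T) T
        = TensorProduct.map (TensorProduct.map (f ∘ₗ T) T) T := by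
      ext a b c; simp
    simpa using LinearMap.congr_fun h u
  have hq2x : ∀ u : (((X ⊗[k] X) ⊗[k] X) ⊗[k] ((X ⊗[k] X) ⊗[k] X)) ⊗[k] ((X ⊗[k] X) ⊗[k] X),
      LL2 f (TensorProduct.map (TensorProduct.map T T) T u)
        = TensorProduct.map (TensorProduct.map T (f ∘ₗ T)) T u := by
    intro u
    have h : LL2 f ∘ₗ TensorProduct.map (TensorProduct.map T T) T
        = TensorProduct.map (TensorProduct.map T (f ∘ₗ T)) T := by
      ext a b c; simp
    simpa using LinearMap.congr_fun h u
  have hq3x : ∀ u : (((X ⊗[k] X) ⊗[k] X) ⊗[k] ((X ⊗[k] X) ⊗[k] X)) ⊗[k] ((X ⊗[k] X) ⊗[k] X),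
      LL3 f (TensorProduct.map (TensorProduct.map T T) T u)
        = TensorProduct.map (TensorProduct.map T T) (f ∘ₗ T) u := by
    intro u
    have h : LL3 f ∘ₗ TensorProduct.map (TensorProduct.map T T) T
        = TensorProduct.map (TensorProduct.map T T) (f ∘ₗ T) := by
      ext a b c; simp
    simpa using LinearMap.congr_fun h u
  have hpsix : ∀ v : (X ⊗[k] X) ⊗[k] X,
      tsdD1 T f v = f (T v) - T (LL1 f v) - T (LL2 f v) - T (LL3 f v) := fun _ => rfl
  have hR1 : TensorProduct.map (TensorProduct.map (tsdD1 T f) T) T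
      = TensorProduct.map (TensorProduct.map (f ∘ₗ T) T) T
        - TensorProduct.map (TensorProduct.map (T ∘ₗ LL1 f) T) T
        - TensorProduct.map (TensorProduct.map (T ∘ₗ LL2 f) T) T
        - TensorProduct.map (TensorProduct.map (T ∘ₗ LL3 f) T) T := by
    ext a b c; simp [hpsix, sub_tmul, tmul_sub]
  have hR2 : TensorProduct.map (TensorProduct.map T (tsdD1 T f)) T
      = TensorProduct.map (TensorProduct.map T (f ∘ₗ T)) T
        - TensorProduct.map (TensorProduct.map T (T ∘ₗ LL1 f)) T
        - TensorProduct.map (TensorProduct.map T (T ∘ₗ LL2 f)) T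
        - TensorProduct.map (TensorProduct.map T (T ∘ₗ LL3 f)) T := by
    ext a b c; simp [hpsix, sub_tmul, tmul_sub]
  have hR3 : TensorProduct.map (TensorProduct.map T T) (tsdD1 T f)
      = TensorProduct.map (TensorProduct.map T T) (f ∘ₗ T)
        - TensorProduct.map (TensorProduct.map T T) (T ∘ₗ LL1 f)
        - TensorProduct.map (TensorProduct.map T T) (T ∘ₗ LL2 f)
        - TensorProduct.map (TensorProduct.map T T) (T ∘ₗ LL3 f) := by
    ext a b c; simp [hpsix, sub_tmul, tmul_sub]
  show D3 Δ ∘ₗ tsdD1 T f = _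
  ext x y z
  simp only [hR1, hR2, hR3, hpsix, LinearMap.sub_apply, LinearMap.add_apply,
    LinearMap.comp_apply, TensorProduct.map_tmul, LL1_tmul, LL2_tmul, LL3_tmul,
    AlgebraTensorModule.curry_apply, TensorProduct.curry_apply,
    LinearMap.coe_restrictScalars,
    hfx, hTmx, map_sub, map_add, add_tmul, tmul_add, sub_tmul, tmul_sub,
    hsx11, hsx12, hsx13, hsx21, hsx22, hsx23, hsx31, hsx32, hsx33,
    hM1x, hM2x, hM3x, hq1x, hq2x, hq3x]
  abel_nf

end PartI

section PartII
open TSDAux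
set_option maxHeartbeats 1000000
variable {k : Type*} [Field k] {X : Type*} [AddCommGroup X] [Module k X]

theorem partII (Δ : X →ₗ[k] X ⊗[k] X) (T : (X ⊗[k] X) ⊗[k] X →ₗ[k] X)
    (ρ : ((X ⊗[k] X) ⊗[k] X) ⊗[k] (((X ⊗[k] X) ⊗[k] X) ⊗[k] ((X ⊗[k] X) ⊗[k] X)) →ₗ[k]
      (((X ⊗[k] X) ⊗[k] X) ⊗[k] ((X ⊗[k] X) ⊗[k] X)) ⊗[k] ((X ⊗[k] X) ⊗[k] X))
    (hρ : ∀ x y z w1 w2 w3 u1 u2 u3 : X,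
      ρ (((x ⊗ₜ[k] y) ⊗ₜ[k] z) ⊗ₜ[k]
            (((w1 ⊗ₜ[k] w2) ⊗ₜ[k] w3) ⊗ₜ[k] ((u1 ⊗ₜ[k] u2) ⊗ₜ[k] u3)))
        = (((x ⊗ₜ[k] w1) ⊗ₜ[k] u1) ⊗ₜ[k] ((y ⊗ₜ[k] w2) ⊗ₜ[k] u2)) ⊗ₜ[k]
            ((z ⊗ₜ[k] w3) ⊗ₜ[k] u3))
    (hTSD : IsTSDMap Δ T ρ)
    (f : X →ₗ[k] X) (hf : IsTernaryCoderivation Δ f) :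
    tsdD2 Δ T ρ (tsdD1 T f) = 0 := by
  have hf' : D3 Δ ∘ₗ f = (LL1 f + LL2 f + LL3 f) ∘ₗ D3 Δ := hf
  have hfx : ∀ x : X, D3 Δ (f x) = LL1 f (D3 Δ x) + LL2 f (D3 Δ x) + LL3 f (D3 Δ x) := by
    intro x
    simpa using LinearMap.congr_fun hf' x
  have hTSD' : T ∘ₗ (TensorProduct.assoc k X X X).symm.toLinearMap ∘ₗ
        TensorProduct.map T (LinearMap.id : X ⊗[k] X →ₗ[k] X ⊗[k] X)
      = T ∘ₗ TensorProduct.map (TensorProduct.map T T) T ∘ₗ ρ ∘ₗ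
        TensorProduct.map LinearMap.id (TensorProduct.map (D3 Δ) (D3 Δ)) := hTSD
  have hTSDx : ∀ (v : (X ⊗[k] X) ⊗[k] X) (w u : X),
      T ((T v ⊗ₜ[k] w) ⊗ₜ[k] u)
        = T (TensorProduct.map (TensorProduct.map T T) T
            (ρ (v ⊗ₜ[k] (D3 Δ w ⊗ₜ[k] D3 Δ u)))) := by
    intro v w u
    simpa using LinearMap.congr_fun hTSD' (v ⊗ₜ[k] (w ⊗ₜ[k] u))
  -- rho conjugation, map level and pointwise
  have hrA1 : ρ ∘ₗ TensorProduct.map (LL1 f)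
        (LinearMap.id : ((X ⊗[k] X) ⊗[k] X) ⊗[k] ((X ⊗[k] X) ⊗[k] X) →ₗ[k] _)
      = LL1 (LL1 f) ∘ₗ ρ := by
    ext x y z w1 w2 w3 u1 u2 u3; simp [hρ]
  have hrA2 : ρ ∘ₗ TensorProduct.map (LL2 f)
        (LinearMap.id : ((X ⊗[k] X) ⊗[k] X) ⊗[k] ((X ⊗[k] X) ⊗[k] X) →ₗ[k] _)
      = LL2 (LL1 f) ∘ₗ ρ := by
    ext x y z w1 w2 w3 u1 u2 u3; simp [hρ]
  have hrA3 : ρ ∘ₗ TensorProduct.map (LL3 f)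
        (LinearMap.id : ((X ⊗[k] X) ⊗[k] X) ⊗[k] ((X ⊗[k] X) ⊗[k] X) →ₗ[k] _)
      = LL3 (LL1 f) ∘ₗ ρ := by
    ext x y z w1 w2 w3 u1 u2 u3; simp [hρ]
  have hrA1x : ∀ (x y z : X) (s : ((X ⊗[k] X) ⊗[k] X) ⊗[k] ((X ⊗[k] X) ⊗[k] X)),
      ρ (((f x ⊗ₜ[k] y) ⊗ₜ[k] z) ⊗ₜ[k] s)
        = LL1 (LL1 f) (ρ (((x ⊗ₜ[k] y) ⊗ₜ[k] z) ⊗ₜ[k] s)) := by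
    intro x y z s; simpa using LinearMap.congr_fun hrA1 (((x ⊗ₜ[k] y) ⊗ₜ[k] z) ⊗ₜ[k] s)
  have hrA2x : ∀ (x y z : X) (s : ((X ⊗[k] X) ⊗[k] X) ⊗[k] ((X ⊗[k] X) ⊗[k] X)),
      ρ (((x ⊗ₜ[k] f y) ⊗ₜ[k] z) ⊗ₜ[k] s)
        = LL2 (LL1 f) (ρ (((x ⊗ₜ[k] y) ⊗ₜ[k] z) ⊗ₜ[k] s)) := by
    intro x y z s; simpa using LinearMap.congr_fun hrA2 (((x ⊗ₜ[k] y) ⊗ₜ[k] z) ⊗ₜ[k] s)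
  have hrA3x : ∀ (x y z : X) (s : ((X ⊗[k] X) ⊗[k] X) ⊗[k] ((X ⊗[k] X) ⊗[k] X)),
      ρ (((x ⊗ₜ[k] y) ⊗ₜ[k] f z) ⊗ₜ[k] s)
        = LL3 (LL1 f) (ρ (((x ⊗ₜ[k] y) ⊗ₜ[k] z) ⊗ₜ[k] s)) := by
    intro x y z s; simpa using LinearMap.congr_fun hrA3 (((x ⊗ₜ[k] y) ⊗ₜ[k] z) ⊗ₜ[k] s)
  have hrB1 : ρ ∘ₗ TensorProduct.map (LinearMap.id : (X ⊗[k] X) ⊗[k] X →ₗ[k] _)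
        (TensorProduct.map (LL1 f) (LinearMap.id : (X ⊗[k] X) ⊗[k] X →ₗ[k] _))
      = LL1 (LL2 f) ∘ₗ ρ := by
    ext x y z w1 w2 w3 u1 u2 u3; simp [hρ]
  have hrB2 : ρ ∘ₗ TensorProduct.map (LinearMap.id : (X ⊗[k] X) ⊗[k] X →ₗ[k] _)
        (TensorProduct.map (LL2 f) (LinearMap.id : (X ⊗[k] X) ⊗[k] X →ₗ[k] _))
      = LL2 (LL2 f) ∘ₗ ρ := by
    ext x y z w1 w2 w3 u1 u2 u3; simp [hρ]
  have hrB3 : ρ ∘ₗ TensorProduct.map (LinearMap.id : (X ⊗[k] X) ⊗[k] X →ₗ[k] _)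
        (TensorProduct.map (LL3 f) (LinearMap.id : (X ⊗[k] X) ⊗[k] X →ₗ[k] _))
      = LL3 (LL2 f) ∘ₗ ρ := by
    ext x y z w1 w2 w3 u1 u2 u3; simp [hρ]
  have hrB1x : ∀ (v s t : (X ⊗[k] X) ⊗[k] X),
      ρ (v ⊗ₜ[k] (LL1 f s ⊗ₜ[k] t)) = LL1 (LL2 f) (ρ (v ⊗ₜ[k] (s ⊗ₜ[k] t))) := by
    intro v s t; simpa using LinearMap.congr_fun hrB1 (v ⊗ₜ[k] (s ⊗ₜ[k] t))
  have hrB2x : ∀ (v s t : (X ⊗[k] X) ⊗[k] X),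
      ρ (v ⊗ₜ[k] (LL2 f s ⊗ₜ[k] t)) = LL2 (LL2 f) (ρ (v ⊗ₜ[k] (s ⊗ₜ[k] t))) := by
    intro v s t; simpa using LinearMap.congr_fun hrB2 (v ⊗ₜ[k] (s ⊗ₜ[k] t))
  have hrB3x : ∀ (v s t : (X ⊗[k] X) ⊗[k] X),
      ρ (v ⊗ₜ[k] (LL3 f s ⊗ₜ[k] t)) = LL3 (LL2 f) (ρ (v ⊗ₜ[k] (s ⊗ₜ[k] t))) := by
    intro v s t; simpa using LinearMap.congr_fun hrB3 (v ⊗ₜ[k] (s ⊗ₜ[k] t))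
  have hrC1 : ρ ∘ₗ TensorProduct.map (LinearMap.id : (X ⊗[k] X) ⊗[k] X →ₗ[k] _)
        (TensorProduct.map (LinearMap.id : (X ⊗[k] X) ⊗[k] X →ₗ[k] _) (LL1 f))
      = LL1 (LL3 f) ∘ₗ ρ := by
    ext x y z w1 w2 w3 u1 u2 u3; simp [hρ]
  have hrC2 : ρ ∘ₗ TensorProduct.map (LinearMap.id : (X ⊗[k] X) ⊗[k] X →ₗ[k] _)
        (TensorProduct.map (LinearMap.id : (X ⊗[k] X) ⊗[k] X →ₗ[k] _) (LL2 f))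
      = LL2 (LL3 f) ∘ₗ ρ := by
    ext x y z w1 w2 w3 u1 u2 u3; simp [hρ]
  have hrC3 : ρ ∘ₗ TensorProduct.map (LinearMap.id : (X ⊗[k] X) ⊗[k] X →ₗ[k] _)
        (TensorProduct.map (LinearMap.id : (X ⊗[k] X) ⊗[k] X →ₗ[k] _) (LL3 f))
      = LL3 (LL3 f) ∘ₗ ρ := by
    ext x y z w1 w2 w3 u1 u2 u3; simp [hρ]
  have hrC1x : ∀ (v s t : (X ⊗[k] X) ⊗[k] X),
      ρ (v ⊗ₜ[k] (s ⊗ₜ[k] LL1 f t)) = LL1 (LL3 f) (ρ (v ⊗ₜ[k] (s ⊗ₜ[k] t))) := by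
    intro v s t; simpa using LinearMap.congr_fun hrC1 (v ⊗ₜ[k] (s ⊗ₜ[k] t))
  have hrC2x : ∀ (v s t : (X ⊗[k] X) ⊗[k] X),
      ρ (v ⊗ₜ[k] (s ⊗ₜ[k] LL2 f t)) = LL2 (LL3 f) (ρ (v ⊗ₜ[k] (s ⊗ₜ[k] t))) := by
    intro v s t; simpa using LinearMap.congr_fun hrC2 (v ⊗ₜ[k] (s ⊗ₜ[k] t))
  have hrC3x : ∀ (v s t : (X ⊗[k] X) ⊗[k] X),
      ρ (v ⊗ₜ[k] (s ⊗ₜ[k] LL3 f t)) = LL3 (LL3 f) (ρ (v ⊗ₜ[k] (s ⊗ₜ[k] t))) := by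
    intro v s t; simpa using LinearMap.congr_fun hrC3 (v ⊗ₜ[k] (s ⊗ₜ[k] t))
  -- merge lemmas, pointwise
  have hM1x : ∀ (g : (X ⊗[k] X) ⊗[k] X →ₗ[k] (X ⊗[k] X) ⊗[k] X)
      (u : (((X ⊗[k] X) ⊗[k] X) ⊗[k] ((X ⊗[k] X) ⊗[k] X)) ⊗[k] ((X ⊗[k] X) ⊗[k] X)),
      TensorProduct.map (TensorProduct.map T T) T (LL1 g u)
        = TensorProduct.map (TensorProduct.map (T ∘ₗ g) T) T u := by
    intro g u
    have h : TensorProduct.map (TensorProduct.map T T) T ∘ₗ LL1 g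
        = TensorProduct.map (TensorProduct.map (T ∘ₗ g) T) T := by
      ext a b c; simp
    simpa using LinearMap.congr_fun h u
  have hM2x : ∀ (g : (X ⊗[k] X) ⊗[k] X →ₗ[k] (X ⊗[k] X) ⊗[k] X)
      (u : (((X ⊗[k] X) ⊗[k] X) ⊗[k] ((X ⊗[k] X) ⊗[k] X)) ⊗[k] ((X ⊗[k] X) ⊗[k] X)),
      TensorProduct.map (TensorProduct.map T T) T (LL2 g u)
        = TensorProduct.map (TensorProduct.map T (T ∘ₗ g)) T u := by
    intro g u
    have h : TensorProduct.map (TensorProduct.map T T) T ∘ₗ LL2 g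
        = TensorProduct.map (TensorProduct.map T (T ∘ₗ g)) T := by
      ext a b c; simp
    simpa using LinearMap.congr_fun h u
  have hM3x : ∀ (g : (X ⊗[k] X) ⊗[k] X →ₗ[k] (X ⊗[k] X) ⊗[k] X)
      (u : (((X ⊗[k] X) ⊗[k] X) ⊗[k] ((X ⊗[k] X) ⊗[k] X)) ⊗[k] ((X ⊗[k] X) ⊗[k] X)),
      TensorProduct.map (TensorProduct.map T T) T (LL3 g u)
        = TensorProduct.map (TensorProduct.map T T) (T ∘ₗ g) u := by
    intro g u
    have h : TensorProduct.map (TensorProduct.map T T) T ∘ₗ LL3 g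
        = TensorProduct.map (TensorProduct.map T T) (T ∘ₗ g) := by
      ext a b c; simp
    simpa using LinearMap.congr_fun h u
  have hq1x : ∀ u : (((X ⊗[k] X) ⊗[k] X) ⊗[k] ((X ⊗[k] X) ⊗[k] X)) ⊗[k] ((X ⊗[k] X) ⊗[k] X),
      LL1 f (TensorProduct.map (TensorProduct.map T T) T u)
        = TensorProduct.map (TensorProduct.map (f ∘ₗ T) T) T u := by
    intro u
    have h : LL1 f ∘ₗ TensorProduct.map (TensorProduct.map T T) T
        = TensorProduct.map (TensorProduct.map (f ∘ₗ T) T) T := by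
      ext a b c; simp
    simpa using LinearMap.congr_fun h u
  have hq2x : ∀ u : (((X ⊗[k] X) ⊗[k] X) ⊗[k] ((X ⊗[k] X) ⊗[k] X)) ⊗[k] ((X ⊗[k] X) ⊗[k] X),
      LL2 f (TensorProduct.map (TensorProduct.map T T) T u)
        = TensorProduct.map (TensorProduct.map T (f ∘ₗ T)) T u := by
    intro u
    have h : LL2 f ∘ₗ TensorProduct.map (TensorProduct.map T T) T
        = TensorProduct.map (TensorProduct.map T (f ∘ₗ T)) T := by
      ext a b c; simp
    simpa using LinearMap.congr_fun h u
  have hq3x : ∀ u : (((X ⊗[k] X) ⊗[k] X) ⊗[k] ((X ⊗[k] X) ⊗[k] X)) ⊗[k] ((X ⊗[k] X) ⊗[k] X),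
      LL3 f (TensorProduct.map (TensorProduct.map T T) T u)
        = TensorProduct.map (TensorProduct.map T T) (f ∘ₗ T) u := by
    intro u
    have h : LL3 f ∘ₗ TensorProduct.map (TensorProduct.map T T) T
        = TensorProduct.map (TensorProduct.map T T) (f ∘ₗ T) := by
      ext a b c; simp
    simpa using LinearMap.congr_fun h u
  have hpsix : ∀ v : (X ⊗[k] X) ⊗[k] X,
      tsdD1 T f v = f (T v) - T (LL1 f v) - T (LL2 f v) - T (LL3 f v) := fun _ => rfl
  have hR1 : TensorProduct.map (TensorProduct.map (tsdD1 T f) T) T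
      = TensorProduct.map (TensorProduct.map (f ∘ₗ T) T) T
        - TensorProduct.map (TensorProduct.map (T ∘ₗ LL1 f) T) T
        - TensorProduct.map (TensorProduct.map (T ∘ₗ LL2 f) T) T
        - TensorProduct.map (TensorProduct.map (T ∘ₗ LL3 f) T) T := by
    ext a b c; simp [hpsix, sub_tmul, tmul_sub]
  have hR2 : TensorProduct.map (TensorProduct.map T (tsdD1 T f)) T
      = TensorProduct.map (TensorProduct.map T (f ∘ₗ T)) T
        - TensorProduct.map (TensorProduct.map T (T ∘ₗ LL1 f)) T
        - TensorProduct.map (TensorProduct.map T (T ∘ₗ LL2 f)) T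
        - TensorProduct.map (TensorProduct.map T (T ∘ₗ LL3 f)) T := by
    ext a b c; simp [hpsix, sub_tmul, tmul_sub]
  have hR3 : TensorProduct.map (TensorProduct.map T T) (tsdD1 T f)
      = TensorProduct.map (TensorProduct.map T T) (f ∘ₗ T)
        - TensorProduct.map (TensorProduct.map T T) (T ∘ₗ LL1 f)
        - TensorProduct.map (TensorProduct.map T T) (T ∘ₗ LL2 f)
        - TensorProduct.map (TensorProduct.map T T) (T ∘ₗ LL3 f) := by
    ext a b c; simp [hpsix, sub_tmul, tmul_sub]
  unfold tsdD2
  ext x y z w u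
  simp only [hR1, hR2, hR3, hpsix, LinearMap.sub_apply, LinearMap.add_apply,
    LinearMap.zero_apply, LinearMap.comp_apply, LinearEquiv.coe_coe,
    TensorProduct.map_tmul, TensorProduct.assoc_symm_tmul, LinearMap.id_coe, id_eq,
    LL1_tmul, LL2_tmul, LL3_tmul,
    AlgebraTensorModule.curry_apply, TensorProduct.curry_apply,
    LinearMap.coe_restrictScalars,
    hfx, hTSDx, map_sub, map_add, add_tmul, tmul_add, sub_tmul, tmul_sub,
    hrA1x, hrA2x, hrA3x, hrB1x, hrB2x, hrB3x, hrC1x, hrC2x, hrC3x,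
    hM1x, hM2x, hM3x, hq1x, hq2x, hq3x]
  abel_nf

end PartII

/-- For a ternary self-distributive object `(X, Δ, ε, T)` in vector spaces over `k`
(`Δ` coassociative, cocommutative, counital; `T` a coalgebra morphism satisfying the
ternary self-distributivity condition), for every ternary coderivation `f : X → X`:
(i) `δ¹f` satisfies the TSD 2-cochain condition, and (ii) `δ²(δ¹f) = 0`. -/
theorem stmt16 {k : Type*} [Field k] {X : Type*} [AddCommGroup X] [Module k X]
    (Δ : X →ₗ[k] X ⊗[k] X) (ε : X →ₗ[k] k)
    (hcoassoc : (TensorProduct.assoc k X X X).toLinearMap ∘ₗ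
        TensorProduct.map Δ LinearMap.id ∘ₗ Δ = TensorProduct.map LinearMap.id Δ ∘ₗ Δ)
    (hcounitl : (TensorProduct.lid k X).toLinearMap ∘ₗ
        TensorProduct.map ε LinearMap.id ∘ₗ Δ = LinearMap.id)
    (hcounitr : (TensorProduct.rid k X).toLinearMap ∘ₗ
        TensorProduct.map LinearMap.id ε ∘ₗ Δ = LinearMap.id)
    (hcocomm : (TensorProduct.comm k X X).toLinearMap ∘ₗ Δ = Δ)
    (T : (X ⊗[k] X) ⊗[k] X →ₗ[k] X)
    (sh : (((X ⊗[k] X) ⊗[k] X) ⊗[k] ((X ⊗[k] X) ⊗[k] X)) ⊗[k] ((X ⊗[k] X) ⊗[k] X) →ₗ[k]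
      (((X ⊗[k] X) ⊗[k] X) ⊗[k] ((X ⊗[k] X) ⊗[k] X)) ⊗[k] ((X ⊗[k] X) ⊗[k] X))
    (hsh : ∀ x1 x2 x3 x4 x5 x6 x7 x8 x9 : X,
      sh ((((x1 ⊗ₜ[k] x2) ⊗ₜ[k] x3) ⊗ₜ[k] ((x4 ⊗ₜ[k] x5) ⊗ₜ[k] x6)) ⊗ₜ[k]
            ((x7 ⊗ₜ[k] x8) ⊗ₜ[k] x9))
        = (((x1 ⊗ₜ[k] x4) ⊗ₜ[k] x7) ⊗ₜ[k] ((x2 ⊗ₜ[k] x5) ⊗ₜ[k] x8)) ⊗ₜ[k]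
            ((x3 ⊗ₜ[k] x6) ⊗ₜ[k] x9))
    (ρ : ((X ⊗[k] X) ⊗[k] X) ⊗[k] (((X ⊗[k] X) ⊗[k] X) ⊗[k] ((X ⊗[k] X) ⊗[k] X)) →ₗ[k]
      (((X ⊗[k] X) ⊗[k] X) ⊗[k] ((X ⊗[k] X) ⊗[k] X)) ⊗[k] ((X ⊗[k] X) ⊗[k] X))
    (hρ : ∀ x y z w1 w2 w3 u1 u2 u3 : X,
      ρ (((x ⊗ₜ[k] y) ⊗ₜ[k] z) ⊗ₜ[k]
            (((w1 ⊗ₜ[k] w2) ⊗ₜ[k] w3) ⊗ₜ[k] ((u1 ⊗ₜ[k] u2) ⊗ₜ[k] u3)))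
        = (((x ⊗ₜ[k] w1) ⊗ₜ[k] u1) ⊗ₜ[k] ((y ⊗ₜ[k] w2) ⊗ₜ[k] u2)) ⊗ₜ[k]
            ((z ⊗ₜ[k] w3) ⊗ₜ[k] u3))
    (hTmor : IsCoalgMor3 Δ T sh) (hTSD : IsTSDMap Δ T ρ) :
    ∀ f : X →ₗ[k] X, IsTernaryCoderivation Δ f →
      IsTSD2Cochain Δ T sh (tsdD1 T f) ∧ tsdD2 Δ T ρ (tsdD1 T f) = 0 := by
  intro f hf
  exact ⟨partI Δ T sh hsh hTmor f hf, partII Δ T ρ hρ hTSD f hf⟩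

end
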